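/- arXiv:1701.00637 — 4 statements merged into one kernel-verified Lean document; each statement's English description precedes it below -/
import Mathlib

section
/- If M₁ β-reduces to N₁ in l₁ steps and M₂ β-reduces to N₂ in l₂ steps, then M₁[x:=M₂] β-reduces to N₁[x:=N₂] in exactly l = l₁ + (number of free occurrences of x in M₁) × l₂ steps (for a suitable choice of reduction path). -/
inductive Lam : Type
  | var : ℕ → Lam
  | lam : Lam → Lam
  | app : Lam → Lam → Lam
  deriving DecidableEq

namespace Lam

/-- term size -/
def size : Lam → ℕ
  | var _ => 1
  | lam M => 1 + M.size
  | app M N => 1 + M.size + N.size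

/-- lift (shift) free variables ≥ d by 1 -/
def lift (d : ℕ) : Lam → Lam
  | var n => if n < d then var n else var (n+1)
  | lam M => lam (M.lift (d+1))
  | app M N => app (M.lift d) (N.lift d)

/-- capture-avoiding substitution of N for the free variable x (de Bruijn) -/
def subst : Lam → ℕ → Lam → Lam
  | var n, x, N => if n = x then N else if x < n then var (n-1) else var n
  | lam M, x, N => lam (M.subst (x+1) (N.lift 0))
  | app M P, x, N => app (M.subst x N) (P.subst x N)

/-- number of free occurrences of the variable x -/
def count : Lam → ℕ → ℕ
  | var n, x => if n = x then 1 else 0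
  | lam M, x => M.count (x+1)
  | app M N, x => M.count x + N.count x

/-- one-step β-reduction -/
inductive Step : Lam → Lam → Prop
  | beta (M N : Lam) : Step (app (lam M) N) (M.subst 0 N)
  | appL {M M' : Lam} (N : Lam) : Step M M' → Step (app M N) (app M' N)
  | appR (M : Lam) {N N' : Lam} : Step N N' → Step (app M N) (app M N')
  | abs {M M' : Lam} : Step M M' → Step (lam M) (lam M')

/-- many-step β-reduction (reflexive-transitive closure) -/
def Red : Lam → Lam → Prop := Relation.ReflTransGen Step

/-- n-step β-reduction -/
def Steps : ℕ → Lam → Lam → Prop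
  | 0, M, N => M = N
  | n+1, M, N => ∃ P, Step M P ∧ Steps n P N

/-- Takahashi translation (Gross-Knuth complete development) -/
def star : Lam → Lam
  | var n => var n
  | lam M => lam (star M)
  | app (lam M) N => (star M).subst 0 (star N)
  | app (var n) N => app (var n) (star N)
  | app (app M₁ M₂) N => app (star (app M₁ M₂)) (star N)

/-- iterated Takahashi translation M^(n*) -/
def iterStar (n : ℕ) (M : Lam) : Lam := star^[n] M

end Lam

/-!
Reduce `M₁[x:=M₂]` to `M₁[x:=N₂]` by running the reduction `M₂ →^{l₂} N₂` inside each of the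
`♯(x∈M₁)` copies of `M₂`, then replay `M₁ →^{l₁} N₁` under the substitution `[x:=N₂]`: a β-step
stays a single β-step after substitution, by the de Bruijn substitution lemma.
-/

namespace Lam

theorem lift_lift_of_le (M : Lam) {i j : ℕ} (h : i ≤ j) :
    (M.lift j).lift i = (M.lift i).lift (j + 1) := by
  induction M generalizing i j with
  | var n => grind [lift]
  | lam M ih => exact congrArg lam (ih (by omega))
  | app M N ihM ihN => simp only [lift, ihM h, ihN h]

theorem subst_lift (M N : Lam) (x : ℕ) : (M.lift x).subst x N = M := by
  induction M generalizing x N with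
  | var n => grind [lift, subst]
  | lam M ih => simp only [lift, subst, ih]
  | app M P ihM ihP => simp only [lift, subst, ihM, ihP]

theorem lift_subst_of_le (M N : Lam) {x d : ℕ} (h : x ≤ d) :
    (M.subst x N).lift d = (M.lift (d + 1)).subst x (N.lift d) := by
  induction M generalizing x d N with
  | var n => grind [lift, subst]
  | lam M ih =>
    simp only [subst, lift, ih _ (Nat.succ_le_succ h), lift_lift_of_le N (Nat.zero_le d)]
  | app M P ihM ihP => simp only [subst, lift, ihM N h, ihP N h]

theorem lift_subst_of_ge (M N : Lam) {x d : ℕ} (h : d ≤ x) :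
    (M.subst x N).lift d = (M.lift d).subst (x + 1) (N.lift d) := by
  induction M generalizing x d N with
  | var n => grind [lift, subst]
  | lam M ih =>
    simp only [subst, lift, ih _ (Nat.succ_le_succ h), lift_lift_of_le N (Nat.zero_le d)]
  | app M P ihM ihP => simp only [subst, lift, ihM N h, ihP N h]

theorem subst_subst_of_le (M P N : Lam) {i x : ℕ} (h : i ≤ x) :
    (M.subst i P).subst x N = (M.subst (x + 1) (N.lift i)).subst i (P.subst x N) := by
  induction M generalizing i x P N with
  | var n => grind [lift, subst, subst_lift]
  | lam M ih =>
    simp only [subst, ih _ _ (Nat.succ_le_succ h), lift_lift_of_le N (Nat.zero_le i),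
      lift_subst_of_ge P N (Nat.zero_le x)]
  | app M Q ihM ihQ => simp only [subst, ihM P N h, ihQ P N h]

theorem Step.lift {M M' : Lam} (h : Step M M') (d : ℕ) : Step (M.lift d) (M'.lift d) := by
  induction h generalizing d with
  | beta M N => rw [lift_subst_of_le M N (Nat.zero_le d)]; exact beta _ _
  | appL _ _ ih => exact appL _ (ih d)
  | appR _ _ ih => exact appR _ (ih d)
  | abs _ ih => exact abs (ih (d + 1))

theorem Step.subst {M M' : Lam} (h : Step M M') (x : ℕ) (N : Lam) :
    Step (M.subst x N) (M'.subst x N) := by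
  induction h generalizing x N with
  | beta M P => rw [subst_subst_of_le M P N (Nat.zero_le x)]; exact beta _ _
  | appL _ _ ih => exact appL _ (ih x N)
  | appR _ _ ih => exact appR _ (ih x N)
  | abs _ ih => exact abs (ih (x + 1) (N.lift 0))

theorem Steps.trans {a b : ℕ} {M P N : Lam} (h₁ : Steps a M P) (h₂ : Steps b P N) :
    Steps (a + b) M N := by
  induction a generalizing M with
  | zero => cases h₁; simpa using h₂
  | succ a ih =>
    obtain ⟨Q, hMQ, hQP⟩ := h₁
    rw [Nat.add_right_comm]
    exact ⟨Q, hMQ, ih hQP⟩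

theorem Steps.map {f : Lam → Lam} (hf : ∀ {M N}, Step M N → Step (f M) (f N))
    {l : ℕ} {M N : Lam} (h : Steps l M N) : Steps l (f M) (f N) := by
  induction l generalizing M with
  | zero => cases h; rfl
  | succ l ih =>
    obtain ⟨P, hMP, hPN⟩ := h
    exact ⟨f P, hf hMP, ih hPN⟩

theorem Steps.subst_left {l : ℕ} {M M' : Lam} (h : Steps l M M') (x : ℕ) (N : Lam) :
    Steps l (M.subst x N) (M'.subst x N) :=
  h.map fun hs => hs.subst x N

theorem Steps.subst_right (M : Lam) (x : ℕ) {l : ℕ} {N N' : Lam} (h : Steps l N N') :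
    Steps (M.count x * l) (M.subst x N) (M.subst x N') := by
  induction M generalizing x N N' with
  | var n =>
    simp only [count, subst]
    split_ifs
    · simpa using h
    all_goals simp [Steps]
  | lam M ih => exact (ih (x + 1) (h.map fun hs => hs.lift 0)).map Step.abs
  | app M P ihM ihP =>
    rw [count, Nat.add_mul]
    exact ((ihM x h).map (Step.appL _)).trans ((ihP x h).map (Step.appR _))

end Lam

/-- substitution lemma for counted reduction lengths -/
theorem steps_subst {l₁ l₂ : ℕ} {M₁ N₁ M₂ N₂ : Lam} (x : ℕ)
    (h₁ : Lam.Steps l₁ M₁ N₁) (h₂ : Lam.Steps l₂ M₂ N₂) :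
    Lam.Steps (l₁ + M₁.count x * l₂) (M₁.subst x M₂) (N₁.subst x N₂) := by
  rw [Nat.add_comm]
  exact (Lam.Steps.subst_right M₁ x h₂).trans (h₁.subst_left x N₂)
end

section
/- If M β-reduces to N in one step, then |N| ≤ |M|²/8 − 1. -/
/-!
Contracting `(λ.P) Q` replaces each of the `k` free occurrences of the bound variable in `P`
by a copy of `Q`, and a term of size `a` has at most `(a + 1) / 2` occurrences of a variable.
The contractum therefore has size at most `a + k (|Q| - 1) ≤ (a + 1)(|Q| + 1) / 2 - 1`, which
AM-GM bounds by `(a + |Q| + 2)² / 8 - 1`. The bound survives passing to a context because every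
term that reduces has size at least `4`.
-/

namespace Lam

lemma size_pos (M : Lam) : 0 < M.size := by
  cases M <;> simp [size]

@[simp]
lemma size_lift (d : ℕ) (M : Lam) : (M.lift d).size = M.size := by
  induction M generalizing d with
  | var n => by_cases h : n < d <;> simp [lift, size, h]
  | lam M ih => simp [lift, size, ih]
  | app M N ih₁ ih₂ => simp [lift, size, ih₁, ih₂]

lemma size_subst_add_count_le (M : Lam) (x : ℕ) (N : Lam) :
    (M.subst x N).size + M.count x ≤ M.size + M.count x * N.size := by
  induction M generalizing x N with
  | var n =>
    by_cases hnx : n = x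
    · simp [subst, count, size, hnx]
    · by_cases hxn : x < n <;> simp [subst, count, size, hnx, hxn]
  | lam M ih =>
    have := ih (x + 1) (N.lift 0)
    simp only [subst, count, size, size_lift] at *
    omega
  | app P Q ih₁ ih₂ =>
    have := ih₁ x N
    have := ih₂ x N
    simp only [subst, count, size]
    nlinarith

lemma two_mul_count_le_size_add_one (M : Lam) (x : ℕ) : 2 * M.count x ≤ M.size + 1 := by
  induction M generalizing x with
  | var n => by_cases hnx : n = x <;> simp [count, size, hnx]
  | lam M ih => have := ih (x + 1); simp only [count, size]; omega
  | app P Q ih₁ ih₂ => have := ih₁ x; have := ih₂ x; simp only [count, size]; omega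

lemma size_beta_add_one_le (P Q : Lam) :
    2 * ((P.subst 0 Q).size + 1) ≤ (P.size + 1) * (Q.size + 1) := by
  have hsubst := size_subst_add_count_le P 0 Q
  have hcount := two_mul_count_le_size_add_one P 0
  have hQ := Q.size_pos
  nlinarith

namespace Step

lemma four_le_size {M N : Lam} (h : Step M N) : 4 ≤ M.size := by
  induction h with
  | beta P Q => have := P.size_pos; have := Q.size_pos; simp only [size]; omega
  | appL Q _ _ => simp only [size]; omega
  | appR P _ _ => simp only [size]; omega
  | abs _ _ => simp only [size]; omega

lemma eight_mul_size_add_one_le_sq {M N : Lam} (h : Step M N) :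
    8 * (N.size + 1) ≤ M.size ^ 2 := by
  induction h with
  | beta P Q =>
    calc 8 * ((P.subst 0 Q).size + 1)
        ≤ 4 * (P.size + 1) * (Q.size + 1) := by linarith [size_beta_add_one_le P Q]
      _ ≤ (P.size + 1 + (Q.size + 1)) ^ 2 := four_mul_le_sq_add _ _
      _ = (app (lam P) Q).size ^ 2 := by simp only [size]; ring
  | appL Q h _ =>
    have := h.four_le_size
    simp only [size]
    nlinarith
  | appR P h _ =>
    have := h.four_le_size
    simp only [size]
    nlinarith
  | abs h _ =>
    have := h.four_le_size
    simp only [size]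
    nlinarith

end Step

end Lam

/-- one-step reduction at most squares the size (divided by 8, minus 1) -/
theorem size_step {M N : Lam} (h : Lam.Step M N) :
    (N.size : ℚ) ≤ (M.size : ℚ) ^ 2 / 8 - 1 := by
  have : 8 * ((N.size : ℚ) + 1) ≤ (M.size : ℚ) ^ 2 := by
    exact_mod_cast h.eight_mul_size_add_one_le_sq
  linarith
end

section
/- Every lambda term M β-reduces to its Takahashi translation M*, and moreover there is a reduction sequence M →^l M* with l ≤ (1/2)|M| − 1 whenever |M| ≥ 4. -/
/-!
Reducing the redexes of `M` bottom-up (first inside the function and the argument of each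
redex, then the redex itself) reaches `M*` in exactly as many steps as `M` has redex
occurrences. Each redex occurrence owns an application node and an abstraction node, and the
variable leaves outnumber the application nodes, so `2 r < |M|`; inspecting the root improves
this to `2 r + 2 ≤ |M|` as soon as `|M| ≥ 2`.
-/

namespace Lam

def redexes : Lam → ℕ
  | var _ => 0
  | lam M => M.redexes
  | app (lam M) N => M.redexes + N.redexes + 1
  | app (var _) N => N.redexes
  | app (app M₁ M₂) N => (app M₁ M₂).redexes + N.redexes

theorem Step.steps_one {M N : Lam} (h : Step M N) : Steps 1 M N := ⟨N, h, rfl⟩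

namespace Steps

theorem trans_s6 {m n : ℕ} {M P N : Lam} (h₁ : Steps m M P) (h₂ : Steps n P N) :
    Steps (m + n) M N := by
  induction m generalizing M with
  | zero => cases h₁; simpa using h₂
  | succ k ih =>
    obtain ⟨Q, hQ, h₁⟩ := h₁
    rw [Nat.add_right_comm]
    exact ⟨Q, hQ, ih h₁⟩

theorem map_s6 {f : Lam → Lam} (hf : ∀ {M M' : Lam}, Step M M' → Step (f M) (f M')) {l : ℕ}
    {M M' : Lam} (h : Steps l M M') : Steps l (f M) (f M') := by
  induction l generalizing M with
  | zero => cases h; rfl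
  | succ k ih => obtain ⟨Q, hQ, h⟩ := h; exact ⟨f Q, hf hQ, ih h⟩

theorem red {l : ℕ} {M N : Lam} (h : Steps l M N) : Red M N := by
  induction l generalizing M with
  | zero => cases h; exact Relation.ReflTransGen.refl
  | succ k ih => obtain ⟨Q, hQ, h⟩ := h; exact Relation.ReflTransGen.head hQ (ih h)

end Steps

theorem steps_redexes_star : (M : Lam) → Steps M.redexes M M.star
  | var _ => rfl
  | lam M => (steps_redexes_star M).map_s6 Step.abs
  | app (var n) N => (steps_redexes_star N).map_s6 (Step.appR (var n))
  | app (lam M) N =>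
    (((steps_redexes_star M).map_s6 Step.abs).map_s6 (Step.appL N) |>.trans
      ((steps_redexes_star N).map_s6 (Step.appR _))).trans_s6 (Step.beta _ _).steps_one
  | app (app M₁ M₂) N =>
    ((steps_redexes_star (app M₁ M₂)).map_s6 (Step.appL N)).trans_s6
      ((steps_redexes_star N).map_s6 (Step.appR _))

theorem two_mul_redexes_lt_size : (M : Lam) → 2 * M.redexes < M.size
  | var _ => by simp [redexes, size]
  | lam M => by have := two_mul_redexes_lt_size M; simp only [redexes, size]; omega
  | app (var _) N => by
    have := two_mul_redexes_lt_size N; simp only [redexes, size]; omega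
  | app (lam M) N => by
    have := two_mul_redexes_lt_size M; have := two_mul_redexes_lt_size N
    simp only [redexes, size]; omega
  | app (app M₁ M₂) N => by
    have := two_mul_redexes_lt_size (app M₁ M₂); have := two_mul_redexes_lt_size N
    simp only [redexes, size] at *; omega

theorem two_mul_redexes_add_two_le_size {M : Lam} (h : 2 ≤ M.size) :
    2 * M.redexes + 2 ≤ M.size := by
  cases M with
  | var _ => simp [size] at h
  | lam M => have := two_mul_redexes_lt_size M; simp only [redexes, size]; omega
  | app M N =>
    have hN := two_mul_redexes_lt_size N
    cases M with
    | var _ => simp only [redexes, size]; omega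
    | lam P => have := two_mul_redexes_lt_size P; simp only [redexes, size]; omega
    | app M₁ M₂ =>
      have := two_mul_redexes_lt_size (app M₁ M₂); simp only [redexes, size] at *; omega

end Lam

/-- M reduces to M*, within (1/2)|M| − 1 steps when |M| ≥ 4 -/
theorem red_star (M : Lam) :
    Lam.Red M M.star ∧
      ∃ l : ℕ, Lam.Steps l M M.star ∧ (4 ≤ M.size → (l : ℚ) ≤ (M.size : ℚ) / 2 - 1) := by
  have steps := Lam.steps_redexes_star M
  refine ⟨steps.red, M.redexes, steps, fun h4 => ?_⟩
  have bound : (2 * M.redexes + 2 : ℚ) ≤ M.size := by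
    exact_mod_cast Lam.two_mul_redexes_add_two_le_size (by omega)
  linarith
end

section
/- (Refined main lemma) Let M₀ =β M_k via a zigzag [M₀,…,M_k] with r forward arrows and l backward arrows (r + l = k), and let m_l be the number of backward arrows among the first r arrows of the zigzag indexed so that M_r is the term reached after position r. Then M₀ ↠ M_r^(m_l*) and M_k ↠ M_r^(m_l*), where m_l ≤ min{l, r}. -/
namespace Lam

theorem lift_lift (M : Lam) (i k : ℕ) (h : i ≤ k) :
    lift i (lift k M) = lift (k+1) (lift i M) := by
  induction M generalizing i k with
  | var n => simp only [lift]; split_ifs <;> simp only [lift] <;> split_ifs <;> grind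
  | lam M ih => simp only [lift, ih _ _ (by omega : i + 1 ≤ k + 1)]
  | app M N ihM ihN => simp only [lift, ihM _ _ h, ihN _ _ h]

theorem lift_subst_above (M : Lam) (j i : ℕ) (s : Lam) (h : j ≤ i) :
    lift i (M.subst j s) = (lift (i+1) M).subst j (lift i s) := by
  induction M generalizing j i s with
  | var n =>
    simp only [subst, lift]
    split_ifs <;> simp only [subst, lift] <;> split_ifs <;> grind
  | lam M ih =>
    simp only [subst, lift, ih _ _ _ (by omega : j + 1 ≤ i + 1), lift_lift s 0 i i.zero_le]
  | app M N ihM ihN => simp only [subst, lift, ihM _ _ _ h, ihN _ _ _ h]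

theorem lift_subst_below (M : Lam) (i j : ℕ) (s : Lam) (h : i ≤ j) :
    lift i (M.subst j s) = (lift i M).subst (j+1) (lift i s) := by
  induction M generalizing i j s with
  | var n =>
    simp only [subst, lift]
    split_ifs <;> simp only [subst, lift] <;> split_ifs <;> grind
  | lam M ih =>
    simp only [subst, lift, ih _ _ _ (by omega : i + 1 ≤ j + 1), lift_lift s 0 i i.zero_le]
  | app M N ihM ihN => simp only [subst, lift, ihM _ _ _ h, ihN _ _ _ h]

theorem subst_lift_s18 (M : Lam) (k : ℕ) (s : Lam) : (lift k M).subst k s = M := by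
  induction M generalizing k s with
  | var n => simp only [lift]; split_ifs <;> simp only [subst] <;> split_ifs <;> grind
  | lam M ih => simp only [lift, subst, ih]
  | app M N ihM ihN => simp only [lift, subst, ihM, ihN]

theorem subst_subst (M : Lam) (i j : ℕ) (u v : Lam) (h : i ≤ j) :
    (M.subst (j+1) (lift i v)).subst i (u.subst j v) = (M.subst i u).subst j v := by
  induction M generalizing i j u v with
  | var n =>
    simp only [subst]
    split_ifs <;> simp only [subst, subst_lift_s18] <;> (try split_ifs) <;> grind
  | lam M ih =>
    simp only [subst, lift_lift v 0 i i.zero_le, lift_subst_below u 0 j v j.zero_le,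
      ih (i+1) (j+1) _ _ (by omega)]
  | app M N ihM ihN => simp only [subst, ihM _ _ _ _ h, ihN _ _ _ _ h]

namespace Red

theorem refl (M : Lam) : Red M M := Relation.ReflTransGen.refl

theorem single {M N : Lam} (h : Step M N) : Red M N := Relation.ReflTransGen.single h

theorem trans {M N P : Lam} (h₁ : Red M N) (h₂ : Red N P) : Red M P :=
  Relation.ReflTransGen.trans h₁ h₂

theorem appL {M M' : Lam} (N : Lam) (h : Red M M') : Red (app M N) (app M' N) :=
  Relation.ReflTransGen.lift (fun M => app M N) (fun _ _ => Step.appL N) _ _ h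

theorem appR (M : Lam) {N N' : Lam} (h : Red N N') : Red (app M N) (app M N') :=
  Relation.ReflTransGen.lift (app M) (fun _ _ => Step.appR M) _ _ h

theorem abs {M M' : Lam} (h : Red M M') : Red (lam M) (lam M') :=
  Relation.ReflTransGen.lift lam (fun _ _ => Step.abs) _ _ h

end Red

inductive Par : Lam → Lam → Prop
  | var (n : ℕ) : Par (var n) (var n)
  | lam {M M'} : Par M M' → Par (lam M) (lam M')
  | app {M M' N N'} : Par M M' → Par N N' → Par (app M N) (app M' N')
  | beta {M M' N N'} : Par M M' → Par N N' → Par (app (lam M) N) (M'.subst 0 N')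

namespace Par

theorem refl (M : Lam) : Par M M := by
  induction M with
  | var n => exact Par.var n
  | lam M ih => exact Par.lam ih
  | app M N ihM ihN => exact Par.app ihM ihN

theorem of_step {M N : Lam} (h : Step M N) : Par M N := by
  induction h with
  | beta M N => exact Par.beta (refl M) (refl N)
  | appL N _ ih => exact Par.app ih (refl N)
  | appR M _ ih => exact Par.app (refl M) ih
  | abs _ ih => exact Par.lam ih

theorem red {M N : Lam} (h : Par M N) : Red M N := by
  induction h with
  | var n => exact Red.refl _
  | lam _ ih => exact Red.abs ih
  | app _ _ ih₁ ih₂ => exact (Red.appL _ ih₁).trans (Red.appR _ ih₂)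
  | beta _ _ ih₁ ih₂ =>
    exact ((Red.appL _ (Red.abs ih₁)).trans (Red.appR _ ih₂)).trans (Red.single (Step.beta _ _))

theorem lift {M M' : Lam} (h : Par M M') (d : ℕ) : Par (M.lift d) (M'.lift d) := by
  induction h generalizing d with
  | var n => simp only [Lam.lift]; split_ifs <;> exact refl _
  | lam _ ih => exact Par.lam (ih (d+1))
  | app _ _ ih₁ ih₂ => exact Par.app (ih₁ d) (ih₂ d)
  | beta _ _ ih₁ ih₂ =>
    rw [Lam.lift, lift_subst_above _ 0 d _ (Nat.zero_le d)]
    exact Par.beta (ih₁ (d+1)) (ih₂ d)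

theorem subst {M M' N N' : Lam} (h : Par M M') (hN : Par N N') (x : ℕ) :
    Par (M.subst x N) (M'.subst x N') := by
  induction h generalizing N N' x with
  | var n => simp only [Lam.subst]; split_ifs <;> first | exact hN | exact refl _
  | lam _ ih => exact Par.lam (ih (hN.lift 0) (x+1))
  | app _ _ ih₁ ih₂ => exact Par.app (ih₁ hN x) (ih₂ hN x)
  | beta _ _ ih₁ ih₂ =>
    have := Par.beta (ih₁ (hN.lift 0) (x+1)) (ih₂ hN x)
    simpa only [Lam.subst, subst_subst _ 0 x _ _ (Nat.zero_le x)] using this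

theorem to_star {M N : Lam} (h : Par M N) : Par N (star M) := by
  induction h with
  | var n => exact Par.var n
  | lam _ ih => exact Par.lam ih
  | beta _ _ ih₁ ih₂ => exact ih₁.subst ih₂ 0
  | @app M M' N N' hM hN ihM ihN =>
    cases M with
    | var n => exact Par.app ihM ihN
    | app P Q => exact Par.app ihM ihN
    | lam P =>
      cases hM with
      | lam hP =>
        cases ihM with
        | lam ihP => exact Par.beta ihP ihN

end Par

theorem Step.red_star {M N : Lam} (h : Step M N) : Red N (star M) :=
  (Par.of_step h).to_star.red

theorem Red.star {M N : Lam} (h : Red M N) : Red (star M) (star N) := by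
  induction h with
  | refl => exact Red.refl _
  | tail _ hstep ih => exact ih.trans (Par.of_step hstep).to_star.to_star.red

theorem Red.iterStar {M N : Lam} (h : Red M N) (n : ℕ) : Red (iterStar n M) (iterStar n N) := by
  induction n with
  | zero => exact h
  | succ n ih =>
    simp only [Lam.iterStar, Function.iterate_succ_apply'] at ih ⊢
    exact ih.star

theorem iterStar_star (n : ℕ) (M : Lam) : iterStar n (star M) = iterStar (n+1) M :=
  (Function.iterate_succ_apply star n M).symm

theorem star_iterStar (n : ℕ) (M : Lam) : star (iterStar n M) = iterStar (n+1) M :=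
  (Function.iterate_succ_apply' star n M).symm

def IsZigzag (Ms : ℕ → Lam) (d : ℕ → Bool) (i j : ℕ) : Prop :=
  ∀ t ∈ Finset.Ico i j, if d t then Step (Ms t) (Ms (t+1)) else Step (Ms (t+1)) (Ms t)

theorem IsZigzag.mono {Ms : ℕ → Lam} {d : ℕ → Bool} {i j i' j' : ℕ}
    (h : IsZigzag Ms d i j) (hi : i ≤ i') (hj : j' ≤ j) : IsZigzag Ms d i' j' :=
  fun t ht => h t (Finset.Ico_subset_Ico hi hj ht)

theorem IsZigzag.red_iterStar_backward {Ms : ℕ → Lam} {d : ℕ → Bool} {i j : ℕ} (hij : i ≤ j)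
    (h : IsZigzag Ms d i j) :
    Red (Ms i) (iterStar ((Finset.Ico i j).filter (fun t => d t = false)).card (Ms j)) := by
  induction j, hij using Nat.le_induction with
  | base =>
    simp only [Finset.Ico_self, Finset.filter_empty, Finset.card_empty]
    exact Red.refl _
  | succ j hij ih =>
    have harrow := h j (by simp [hij])
    rw [Nat.Ico_succ_right_eq_insert_Ico hij, Finset.filter_insert]
    cases hd : d j <;> simp only [hd, if_true, if_false, Bool.false_eq_true] at harrow ⊢
    · rw [Finset.card_insert_of_notMem (by simp), ← iterStar_star]
      exact (ih (h.mono le_rfl j.le_succ)).trans (harrow.red_star.iterStar _)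
    · exact (ih (h.mono le_rfl j.le_succ)).trans ((Red.single harrow).iterStar _)

theorem IsZigzag.red_iterStar_forward {Ms : ℕ → Lam} {d : ℕ → Bool} {i j : ℕ} (hij : i ≤ j)
    (h : IsZigzag Ms d i j) :
    Red (Ms j) (iterStar ((Finset.Ico i j).filter (fun t => d t = true)).card (Ms i)) := by
  induction j, hij using Nat.le_induction with
  | base =>
    simp only [Finset.Ico_self, Finset.filter_empty, Finset.card_empty]
    exact Red.refl _
  | succ j hij ih =>
    have harrow := h j (by simp [hij])
    rw [Nat.Ico_succ_right_eq_insert_Ico hij, Finset.filter_insert]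
    cases hd : d j <;> simp only [hd, if_true, if_false, Bool.false_eq_true] at harrow ⊢
    · exact (Red.single harrow).trans (ih (h.mono le_rfl j.le_succ))
    · rw [Finset.card_insert_of_notMem (by simp), ← star_iterStar]
      exact harrow.red_star.trans (ih (h.mono le_rfl j.le_succ)).star

end Lam

theorem card_filter_Ico_eq_card_filter_range_not (d : ℕ → Bool) {k r : ℕ}
    (hr : ((Finset.range k).filter (fun t => d t = true)).card = r) :
    ((Finset.Ico r k).filter (fun t => d t = true)).card =
      ((Finset.range r).filter (fun t => d t = false)).card := by
  have hrk : r ≤ k := hr ▸ (Finset.card_filter_le _ _).trans (Finset.card_range k).le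
  have hsplit : r = ((Finset.range r).filter (fun t => d t = true)).card
      + ((Finset.Ico r k).filter (fun t => d t = true)).card := by
    nth_rw 1 [← hr]
    rw [Finset.range_eq_Ico, Finset.range_eq_Ico,
      ← Finset.Ico_union_Ico_eq_Ico r.zero_le hrk, Finset.filter_union,
      Finset.card_union_of_disjoint
        (Finset.disjoint_filter_filter (Finset.Ico_disjoint_Ico_consecutive 0 r k))]
  have hpart := Finset.card_filter_add_card_filter_not (s := Finset.range r) (fun t => d t = true)
  simp only [Finset.card_range, Bool.not_eq_true] at hpart
  omega

/-- refined main lemma. A zigzag of length k is given by its terms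
`Ms 0, …, Ms k` and arrow directions `d i` (`true` = forward `Ms i → Ms (i+1)`,
`false` = backward `Ms (i+1) → Ms i`). With r forward arrows, l backward arrows
and m_l backward arrows among the first r arrows, both ends reduce to
(Ms r)^(m_l*), and m_l ≤ min l r. -/
theorem refined_main_lemma (k : ℕ) (Ms : ℕ → Lam) (d : ℕ → Bool)
    (hzig : ∀ i < k, if d i then Lam.Step (Ms i) (Ms (i+1))
                     else Lam.Step (Ms (i+1)) (Ms i)) :
    ∀ r l ml : ℕ,
      r = ((Finset.range k).filter (fun i => d i = true)).card →
      l = ((Finset.range k).filter (fun i => d i = false)).card →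
      ml = ((Finset.range r).filter (fun i => d i = false)).card →
      Lam.Red (Ms 0) (Lam.iterStar ml (Ms r)) ∧
        Lam.Red (Ms k) (Lam.iterStar ml (Ms r)) ∧
        ml ≤ min l r := by
  intro r l ml hr hl hml
  have hrk : r ≤ k := hr ▸ (Finset.card_filter_le _ _).trans (Finset.card_range k).le
  have hzig' : Lam.IsZigzag Ms d 0 k := fun t ht => hzig t (Finset.mem_Ico.1 ht).2
  have hleft := (hzig'.mono le_rfl hrk).red_iterStar_backward r.zero_le
  have hright := (hzig'.mono r.zero_le le_rfl).red_iterStar_forward hrk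
  rw [← Finset.range_eq_Ico, ← hml] at hleft
  rw [card_filter_Ico_eq_card_filter_range_not d hr.symm, ← hml] at hright
  refine ⟨hleft, hright, le_min ?_ ?_⟩
  · rw [hml, hl]
    exact Finset.card_le_card (Finset.filter_subset_filter _ (Finset.range_subset_range.2 hrk))
  · exact hml ▸ (Finset.card_filter_le _ _).trans (Finset.card_range r).le
end
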